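/- Let Ω be a bounded smooth domain in ℝⁿ (n ≥ 3) and u ∈ L^{2*}(Ω) with u > 0 a.e. and λ ≥ 0. Then the first generalised eigenvalue μ₁^λ(u) = inf_{v ∈ H¹₀(Ω)\{0}} (∫_Ω (|∇v|² − λv²) dx) / (∫_Ω u^{2*−2} v² dx) is finite, i.e. μ₁^λ(u) > −∞. -/

import Mathlib

open MeasureTheory Filter

noncomputable section

abbrev Euc (n : ℕ) : Type := EuclideanSpace ℝ (Fin n)

/-- The critical Sobolev exponent `2* = 2n/(n-2)`. -/
def critExp (n : ℕ) : ℝ := 2 * n / (n - 2)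

/-- A bounded smooth domain (modelled as a nonempty bounded open set). -/
structure IsNiceDomain {n : ℕ} (Ω : Set (Euc n)) : Prop where
  isOpen : IsOpen Ω
  bounded : Bornology.IsBounded Ω
  nonempty : Ω.Nonempty

/-- Membership in (a model of) `H¹₀(Ω)`. -/
structure MemH10 {n : ℕ} (Ω : Set (Euc n)) (v : Euc n → ℝ) : Prop where
  smooth : ContDiff ℝ 1 v
  vanish : ∀ x, x ∉ Ω → v x = 0
  sq_int : Integrable (fun x => (v x) ^ 2) (volume.restrict Ω)
  grad_sq_int : Integrable (fun x => ‖gradient v x‖ ^ 2) (volume.restrict Ω)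

/-- `u > 0` a.e. in `Ω`. -/
def aePos {n : ℕ} (Ω : Set (Euc n)) (u : Euc n → ℝ) : Prop :=
  ∀ᵐ x ∂(volume.restrict Ω), 0 < u x

/-- `v` is nonzero as an element of a Lebesgue space on `Ω`. -/
def aeNonzero {n : ℕ} (Ω : Set (Euc n)) (v : Euc n → ℝ) : Prop :=
  ¬ (∀ᵐ x ∂(volume.restrict Ω), v x = 0)

/-- Membership in `L^{2*}(Ω)`. -/
structure MemL2star {n : ℕ} (Ω : Set (Euc n)) (u : Euc n → ℝ) : Prop where
  meas : AEStronglyMeasurable u (volume.restrict Ω)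
  int : Integrable (fun x => |u x| ^ critExp n) (volume.restrict Ω)

/-- The `L^{2*}(Ω)` norm. -/
def lpCritNorm {n : ℕ} (Ω : Set (Euc n)) (u : Euc n → ℝ) : ℝ :=
  (∫ x in Ω, |u x| ^ critExp n) ^ (1 / critExp n)

/-- The quadratic form `∫_Ω (|∇v|² − λ v²)`. -/
def energyForm {n : ℕ} (Ω : Set (Euc n)) (lam : ℝ) (v : Euc n → ℝ) : ℝ :=
  ∫ x in Ω, (‖gradient v x‖ ^ 2 - lam * (v x) ^ 2)

/-- The weighted pairing `∫_Ω u^{2*−2} f g`. -/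
def weightCross {n : ℕ} (Ω : Set (Euc n)) (u f g : Euc n → ℝ) : ℝ :=
  ∫ x in Ω, (u x) ^ (critExp n - 2) * (f x * g x)

/-- The weighted square norm `∫_Ω u^{2*−2} v²`. -/
def weightDenom {n : ℕ} (Ω : Set (Euc n)) (u v : Euc n → ℝ) : ℝ :=
  weightCross Ω u v v

/-- The weighted Rayleigh quotient. -/
def rayleigh {n : ℕ} (Ω : Set (Euc n)) (lam : ℝ) (u v : Euc n → ℝ) : ℝ :=
  energyForm Ω lam v / weightDenom Ω u v

/-- Linear independence of `V` in `L²(Ω, u^{2*−2} dx)`. -/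
def IndepL2u {n : ℕ} (Ω : Set (Euc n)) (u : Euc n → ℝ) {k : ℕ}
    (V : Fin k → Euc n → ℝ) : Prop :=
  ∀ c : Fin k → ℝ,
    (∀ᵐ x ∂(volume.restrict Ω),
      (u x) ^ ((2 : ℝ) / ((n : ℝ) - 2)) * (∑ i, c i * V i x) = 0) → c = 0

/-- The `k`-th generalised eigenvalue `μ_k^λ(u)` of `−Δ−λ` with weight `u`,
defined by min-max over `k`-dimensional subspaces of `H¹₀(Ω)`
(`k`-dimensional in `L²(Ω, u^{2*−2}dx)`). -/
def muGen {n : ℕ} (Ω : Set (Euc n)) (lam : ℝ) (u : Euc n → ℝ) (k : ℕ) : ℝ :=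
  sInf { m : ℝ | ∃ V : Fin k → Euc n → ℝ, (∀ i, MemH10 Ω (V i)) ∧ IndepL2u Ω u V ∧
    m = sSup { q : ℝ | ∃ c : Fin k → ℝ, c ≠ 0 ∧
      q = rayleigh Ω lam u (fun x => ∑ i, c i * V i x) } }

/-- The first generalised eigenvalue written as a plain infimum of Rayleigh quotients. -/
def mu1Simple {n : ℕ} (Ω : Set (Euc n)) (lam : ℝ) (u : Euc n → ℝ) : ℝ :=
  sInf { q : ℝ | ∃ v, MemH10 Ω v ∧ aeNonzero Ω v ∧ q = rayleigh Ω lam u v }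

/-- `φ` weakly solves `(−Δ − λ) φ = μ u^{2*−2} φ` in `Ω`, `φ ∈ H¹₀(Ω)`. -/
def IsWeakEigen {n : ℕ} (Ω : Set (Euc n)) (lam : ℝ) (u φ : Euc n → ℝ) (μ : ℝ) : Prop :=
  MemH10 Ω φ ∧ ∀ v, MemH10 Ω v →
    (∫ x in Ω, ((inner ℝ (gradient φ x) (gradient v x) : ℝ) - lam * (φ x * v x)))
      = μ * ∫ x in Ω, (u x) ^ (critExp n - 2) * (φ x * v x)

/-- `φ` is a Dirichlet eigenfunction of `−Δ` on `Ω` with eigenvalue `Λ`. -/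
def IsDirEigenfunction {n : ℕ} (Ω : Set (Euc n)) (φ : Euc n → ℝ) (Λ : ℝ) : Prop :=
  MemH10 Ω φ ∧ aeNonzero Ω φ ∧ ∀ v, MemH10 Ω v →
    (∫ x in Ω, (inner ℝ (gradient φ x) (gradient v x) : ℝ)) = Λ * ∫ x in Ω, φ x * v x

/-- `Λ` is a Dirichlet eigenvalue of `−Δ` on `Ω`. -/
def IsDirEigenvalue {n : ℕ} (Ω : Set (Euc n)) (Λ : ℝ) : Prop :=
  ∃ φ, IsDirEigenfunction Ω φ Λ

/-- The span of all Dirichlet eigenfunctions with eigenvalue `≤ Λi`;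
its (finite) rank is the counting function `N(i)`. -/
def lowEigSpan {n : ℕ} (Ω : Set (Euc n)) (Λi : ℝ) : Submodule ℝ (Euc n → ℝ) :=
  Submodule.span ℝ {φ | ∃ μ, 0 < μ ∧ μ ≤ Λi ∧ IsDirEigenfunction Ω φ μ}

/-- `μ_k^λ(Ω)`: the infimum of `μ_k^λ(u)` over normalised positive weights. -/
def muOmega {n : ℕ} (Ω : Set (Euc n)) (lam : ℝ) (k : ℕ) : ℝ :=
  sInf { m : ℝ | ∃ u, MemL2star Ω u ∧ aePos Ω u ∧ lpCritNorm Ω u = 1 ∧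
    m = muGen Ω lam u k }

/-- `K_n^{−2}`: the inverse square of the optimal Sobolev constant of `ℝⁿ`. -/
def sobolevInvSq (n : ℕ) : ℝ :=
  sInf { q : ℝ | ∃ φ : Euc n → ℝ, ContDiff ℝ (⊤ : ℕ∞) φ ∧ HasCompactSupport φ ∧ φ ≠ 0 ∧
    q = (∫ x, ‖gradient φ x‖ ^ 2) / (∫ x, |φ x| ^ critExp n) ^ (((n : ℝ) - 2) / n) }

/-- `w` is a weak solution of the Brézis–Nirenberg equation
`−Δw − λ w = |w|^{2*−2} w` in `Ω`, `w ∈ H¹₀(Ω)`. -/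
def SolvesBN {n : ℕ} (Ω : Set (Euc n)) (lam : ℝ) (w : Euc n → ℝ) : Prop :=
  MemH10 Ω w ∧ ∀ v, MemH10 Ω v →
    (∫ x in Ω, ((inner ℝ (gradient w x) (gradient v x) : ℝ) - lam * (w x * v x)))
      = ∫ x in Ω, |w x| ^ (critExp n - 2) * (w x * v x)

open scoped ENNReal NNReal Topology Pointwise

open Metric Set in
open scoped Topology Pointwise in
lemma BNaux.fderiv_ae_zero_on_zero_set {n : ℕ} {s : Set (Euc n)} (hs : MeasurableSet s)
    {v : Euc n → ℝ} (hv : Differentiable ℝ v) (h0 : ∀ x ∈ s, v x = 0) :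
    ∀ᵐ x, x ∈ s → fderiv ℝ v x = 0 := by
  filter_upwards [Besicovitch.ae_tendsto_measure_inter_div_of_measurableSet
    (volume : Measure (Euc n)) hs] with x hx hxs
  by_contra hL
  set L := fderiv ℝ v x with hLdef
  rw [Set.indicator_of_mem hxs] at hx
  simp only [Pi.one_apply] at hx
  have hker : LinearMap.ker (L : Euc n →ₗ[ℝ] ℝ) ≠ ⊤ := by
    intro h
    apply hL
    ext z
    have : z ∈ LinearMap.ker (L : Euc n →ₗ[ℝ] ℝ) := by rw [h]; trivial
    simpa using this
  set Z : ℕ → Set (Euc n) := fun k =>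
    {z ∈ closedBall (0 : Euc n) 1 | ‖L z‖ ≤ 1 / (k + 1)} with hZ
  have hZmeas : ∀ k, MeasurableSet (Z k) := by
    intro k
    exact measurableSet_closedBall.inter
      (isClosed_le (L.continuous.norm) continuous_const).measurableSet
  have hZanti : Antitone Z := by
    intro a b hab z hz
    refine ⟨hz.1, hz.2.trans ?_⟩
    apply one_div_le_one_div_of_le (by positivity)
    exact_mod_cast by exact_mod_cast (by omega : a + 1 ≤ b + 1)
  have hinter : (⋂ k, Z k) ⊆ (LinearMap.ker (L : Euc n →ₗ[ℝ] ℝ) : Submodule ℝ (Euc n)) := by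
    intro z hz
    simp only [Set.mem_iInter] at hz
    have : ‖L z‖ = 0 := by
      refine le_antisymm ?_ (norm_nonneg _)
      refine le_of_forall_pos_le_add (fun ε hε => ?_)
      obtain ⟨k, hk⟩ := exists_nat_one_div_lt hε
      calc ‖L z‖ ≤ 1 / (k + 1) := (hz k).2
        _ ≤ 0 + ε := by rw [zero_add]; exact hk.le
    simpa [LinearMap.mem_ker] using norm_eq_zero.mp this
  have hinter0 : volume (⋂ k, Z k) = 0 :=
    measure_mono_null hinter (Measure.addHaar_submodule _ _ hker)
  have hball : (0 : ℝ≥0∞) < volume (closedBall (0 : Euc n) 1) :=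
    measure_closedBall_pos _ _ one_pos
  have hballne : volume (closedBall (0 : Euc n) 1) ≠ ⊤ :=
    (measure_closedBall_lt_top).ne
  have htend : Tendsto (fun k => volume (Z k)) atTop (𝓝 0) := by
    rw [← hinter0]
    exact tendsto_measure_iInter_atTop (fun k => (hZmeas k).nullMeasurableSet) hZanti
      ⟨0, ((measure_mono (fun z hz => hz.1)).trans_lt measure_closedBall_lt_top).ne⟩
  obtain ⟨k, hk⟩ := (htend.eventually_lt_const hball).exists
  set θ := volume (Z k) / volume (closedBall (0 : Euc n) 1) with hθ
  have hθ1 : θ < 1 := ENNReal.div_lt_of_lt_mul (by simpa using hk)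
  set ε := 1 / ((k : ℝ) + 1) with hε
  have hεpos : 0 < ε := by positivity
  have hlittle := (hv x).hasFDerivAt.isLittleO.def hεpos
  rw [Metric.eventually_nhds_iff] at hlittle
  obtain ⟨δ, hδpos, hδ⟩ := hlittle
  have hsmall : ∀ r : ℝ, 0 < r → r < δ →
      volume (s ∩ closedBall x r) / volume (closedBall x r) ≤ θ := by
    intro r hr hrδ
    have hsub : s ∩ closedBall x r ⊆ x +ᵥ (r • Z k) := by
      intro y hy
      set z := r⁻¹ • (y - x) with hzdef
      have hynorm : ‖y - x‖ ≤ r := by simpa [dist_eq_norm] using hy.2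
      have hz1 : z ∈ closedBall (0 : Euc n) 1 := by
        rw [mem_closedBall, dist_zero_right, hzdef, norm_smul, norm_inv,
          Real.norm_of_nonneg hr.le, inv_mul_le_iff₀ hr]
        simpa using hynorm
      have hz2 : ‖L z‖ ≤ 1 / ((k : ℝ) + 1) := by
        have hdy : dist y x < δ := lt_of_le_of_lt (mem_closedBall.mp hy.2) hrδ
        have hcl := hδ hdy
        rw [h0 y hy.1, h0 x hxs, sub_zero, zero_sub, norm_neg] at hcl
        rw [hzdef, L.map_smul, norm_smul, norm_inv, Real.norm_of_nonneg hr.le,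
          inv_mul_le_iff₀ hr]
        calc ‖L (y - x)‖ ≤ ε * ‖y - x‖ := hcl
          _ ≤ ε * r := mul_le_mul_of_nonneg_left hynorm hεpos.le
          _ = 1 / ((k:ℝ)+1) * r := by rw [hε]
          _ = r * (1/((k:ℝ)+1)) := mul_comm _ _
      have hrz : r • z = y - x := by
        rw [hzdef, smul_smul, mul_inv_cancel₀ hr.ne', one_smul]
      rw [Set.mem_vadd_set]
      refine ⟨r • z, Set.smul_mem_smul_set ⟨hz1, hz2⟩, ?_⟩
      rw [hrz, vadd_eq_add]
      abel
    have h1 : volume (s ∩ closedBall x r) ≤ ENNReal.ofReal (r ^ n) * volume (Z k) := by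
      refine (measure_mono hsub).trans ?_
      rw [measure_vadd, Measure.addHaar_smul]
      simp [abs_of_nonneg (pow_nonneg hr.le n), finrank_euclideanSpace]
    have h2 : volume (closedBall x r) =
        ENNReal.ofReal (r ^ n) * volume (closedBall (0 : Euc n) 1) := by
      rw [Measure.addHaar_closedBall' _ _ hr.le, finrank_euclideanSpace]
      simp
    rw [h2, hθ]
    refine (ENNReal.div_le_div_right h1 _).trans ?_
    rw [ENNReal.mul_div_mul_left _ _ (by simp [hr]) ENNReal.ofReal_ne_top]
  have hev1 : ∀ᶠ r in 𝓝[>] (0:ℝ),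
      θ < volume (s ∩ closedBall x r) / volume (closedBall x r) :=
    hx.eventually (eventually_gt_nhds hθ1)
  have hev2 : ∀ᶠ r in 𝓝[>] (0:ℝ),
      volume (s ∩ closedBall x r) / volume (closedBall x r) ≤ θ := by
    filter_upwards [Ioo_mem_nhdsGT hδpos] with r hr
    exact hsmall r hr.1 hr.2
  obtain ⟨r, h1, h2⟩ := (hev1.and hev2).exists
  exact absurd (h1.trans_le h2) (lt_irrefl _)

namespace BNaux

lemma ofReal_sq (a : ℝ) : ENNReal.ofReal (a ^ 2) = (‖a‖₊ : ℝ≥0∞) ^ 2 := by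
  have h : a ^ 2 = ‖a‖ ^ 2 := by rw [Real.norm_eq_abs, sq_abs]
  rw [h, ENNReal.ofReal_pow (norm_nonneg a), ofReal_norm, enorm_eq_nnnorm]

lemma norm_gradient {n : ℕ} (v : Euc n → ℝ) (x : Euc n) :
    ‖gradient v x‖ = ‖fderiv ℝ v x‖ := by
  rw [gradient]
  exact LinearIsometryEquiv.norm_map _ _

lemma crit_gt_two {n : ℕ} (hn : 3 ≤ n) : 2 < critExp n := by
  have hn3 : (3 : ℝ) ≤ (n : ℝ) := by exact_mod_cast hn
  have hn2 : (0 : ℝ) < (n : ℝ) - 2 := by linarith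
  rw [critExp, lt_div_iff₀ hn2]
  linarith

lemma memH10_hasCompactSupport {n : ℕ} {Ω : Set (Euc n)} (hΩ : IsNiceDomain Ω)
    {v : Euc n → ℝ} (hv : MemH10 Ω v) : HasCompactSupport v :=
  HasCompactSupport.intro hΩ.bounded.isCompact_closure
    (fun x hx => hv.vanish x (fun h => hx (subset_closure h)))

/-- Integrability of the weight integrand. -/
lemma weight_integrable {n : ℕ} (hn : 3 ≤ n) {Ω : Set (Euc n)} (hΩ : IsNiceDomain Ω)
    {u v : Euc n → ℝ} (hu : MemL2star Ω u) (hvc : Continuous v)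
    (hcs : HasCompactSupport v) :
    MeasureTheory.Integrable (fun x => u x ^ (critExp n - 2) * (v x ^ 2))
      (MeasureTheory.volume.restrict Ω) := by
  haveI : MeasureTheory.IsFiniteMeasure (MeasureTheory.volume.restrict Ω) :=
    ⟨by rw [MeasureTheory.Measure.restrict_apply_univ]; exact hΩ.bounded.measure_lt_top⟩
  have hq2 : (0 : ℝ) < critExp n - 2 := by linarith [crit_gt_two hn]
  obtain ⟨Cv, hCv⟩ := hcs.exists_bound_of_continuous hvc
  have hCv0 : 0 ≤ Cv := le_trans (norm_nonneg _) (hCv (Classical.arbitrary _))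
  have hmeas : MeasureTheory.AEStronglyMeasurable
      (fun x => u x ^ (critExp n - 2) * (v x ^ 2)) (MeasureTheory.volume.restrict Ω) := by
    have hcont : Continuous (fun t : ℝ => t ^ (critExp n - 2)) := by
      rw [continuous_iff_continuousAt]
      exact fun x => Real.continuousAt_rpow_const x _ (Or.inr hq2.le)
    exact (hcont.comp_aestronglyMeasurable hu.meas).mul
      ((hvc.pow 2).aestronglyMeasurable)
  have hgint : MeasureTheory.Integrable (fun x => (1 + |u x| ^ critExp n) * Cv ^ 2)
      (MeasureTheory.volume.restrict Ω) := by
    have := ((MeasureTheory.integrable_const (1 : ℝ)).add hu.int).mul_const (Cv ^ 2)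
    exact this.congr (Filter.Eventually.of_forall (fun x => by simp [Pi.add_apply]))
  refine MeasureTheory.Integrable.mono' hgint hmeas ?_
  refine Filter.Eventually.of_forall (fun x => ?_)
  have h1 : |u x ^ (critExp n - 2)| ≤ 1 + |u x| ^ critExp n := by
    refine (Real.abs_rpow_le_abs_rpow _ _).trans ?_
    rcases le_or_gt (|u x|) 1 with h | h
    · have := Real.rpow_le_one (abs_nonneg _) h hq2.le
      have h2 : (0:ℝ) ≤ |u x| ^ critExp n := Real.rpow_nonneg (abs_nonneg _) _
      linarith
    · have := Real.rpow_le_rpow_of_exponent_le h.le (by linarith : critExp n - 2 ≤ critExp n)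
      linarith
  have h2 : v x ^ 2 ≤ Cv ^ 2 := by
    have := hCv x
    rw [Real.norm_eq_abs] at this
    calc v x ^ 2 = |v x| ^ 2 := (sq_abs _).symm
      _ ≤ Cv ^ 2 := pow_le_pow_left₀ (abs_nonneg _) this 2
  have h3 : (0:ℝ) ≤ v x ^ 2 := sq_nonneg _
  calc ‖u x ^ (critExp n - 2) * v x ^ 2‖ = |u x ^ (critExp n - 2)| * v x ^ 2 := by
        rw [Real.norm_eq_abs, abs_mul, abs_of_nonneg h3]
    _ ≤ (1 + |u x| ^ critExp n) * Cv ^ 2 := by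
        apply mul_le_mul h1 h2 h3
        have : (0:ℝ) ≤ |u x| ^ critExp n := Real.rpow_nonneg (abs_nonneg _) _
        linarith

/-- Positivity of the weighted denominator. -/
lemma weightDenom_pos {n : ℕ} (hn : 3 ≤ n) {Ω : Set (Euc n)} (hΩ : IsNiceDomain Ω)
    {u v : Euc n → ℝ} (hu : MemL2star Ω u) (hupos : aePos Ω u)
    (hv : MemH10 Ω v) (hvne : aeNonzero Ω v) :
    0 < weightDenom Ω u v := by
  have hq2 : (0 : ℝ) < critExp n - 2 := by linarith [crit_gt_two hn]
  have hint0 := weight_integrable hn hΩ hu hv.smooth.continuous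
    (memH10_hasCompactSupport hΩ hv)
  have hint : MeasureTheory.Integrable (fun x => u x ^ (critExp n - 2) * (v x * v x))
      (MeasureTheory.volume.restrict Ω) := by
    refine hint0.congr (Filter.Eventually.of_forall (fun x => ?_))
    ring
  have hweightnn : ∀ᵐ x ∂(MeasureTheory.volume.restrict Ω),
      0 ≤ u x ^ (critExp n - 2) * (v x * v x) := by
    filter_upwards [hupos] with x hx
    exact mul_nonneg (Real.rpow_nonneg hx.le _) (mul_self_nonneg _)
  rw [weightDenom, weightCross]
  rw [MeasureTheory.integral_pos_iff_support_of_nonneg_ae hweightnn hint]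
  by_contra hsupp
  push_neg at hsupp
  have h0 : (MeasureTheory.volume.restrict Ω)
      (Function.support fun x => u x ^ (critExp n - 2) * (v x * v x)) = 0 :=
    le_antisymm hsupp (by simp)
  apply hvne
  have := MeasureTheory.measure_eq_zero_iff_ae_notMem.mp h0
  filter_upwards [this, hupos] with x hx hux
  rw [Function.notMem_support] at hx
  have hune : u x ^ (critExp n - 2) ≠ 0 := (Real.rpow_pos_of_pos hux _).ne'
  have := (mul_eq_zero.mp hx).resolve_left hune
  exact mul_self_eq_zero.mp this

end BNaux

namespace BNaux

lemma rpow_two_eq (x : ℝ≥0∞) : x ^ (2:ℝ) = x ^ (2:ℕ) := by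
  rw [show (2:ℝ) = ((2:ℕ):ℝ) by norm_num, ENNReal.rpow_natCast]

lemma eLpNorm_two_sq {α F : Type*} [MeasurableSpace α] [NormedAddCommGroup F]
    (μ : Measure α) (f : α → F) :
    eLpNorm f 2 μ ^ (2:ℝ) = ∫⁻ x, (‖f x‖₊ : ℝ≥0∞) ^ (2:ℕ) ∂μ := by
  have h := eLpNorm_nnreal_pow_eq_lintegral (μ := μ) (f := f) (p := (2:ℝ≥0)) two_ne_zero
  simp only [ENNReal.coe_ofNat, NNReal.coe_ofNat] at h
  rw [h]
  simp_rw [rpow_two_eq]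
  simp only [enorm_eq_nnnorm]

lemma sobolev {n : ℕ} (hn : 3 ≤ n) {v : Euc n → ℝ} (hv : ContDiff ℝ 1 v)
    (hcs : HasCompactSupport v) :
    eLpNorm v (Real.toNNReal (critExp n)) volume ≤
      (eLpNormLESNormFDerivOfEqInnerConst (volume : Measure (Euc n)) 2 : ℝ≥0∞) *
        eLpNorm (fderiv ℝ v) 2 volume := by
  have hfin : 0 < Module.finrank ℝ (Euc n) := by rw [finrank_euclideanSpace, Fintype.card_fin]; omega
  have hq2 := crit_gt_two hn
  have hq0 : (0:ℝ) < critExp n := by linarith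
  have hn3 : (3:ℝ) ≤ (n:ℝ) := by exact_mod_cast hn
  have hn0 : (n:ℝ) ≠ 0 := by linarith
  have hn2 : (n:ℝ) - 2 ≠ 0 := by linarith
  refine eLpNorm_le_eLpNorm_fderiv_of_eq_inner volume hv hcs (p := 2) (by norm_num) hfin ?_
  rw [Real.coe_toNNReal _ hq0.le, finrank_euclideanSpace, Fintype.card_fin, critExp]
  rw [inv_div]
  field_simp
  push_cast
  ring

lemma key_estimate {n : ℕ} (hn : 3 ≤ n) (Ω : Set (Euc n)) (hΩ : IsNiceDomain Ω)
    (lam : ℝ) (hlam : 0 ≤ lam) (u : Euc n → ℝ) (hu : MemL2star Ω u) (hupos : aePos Ω u) :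
    ∃ c : ℝ, 0 ≤ c ∧ ∀ v, MemH10 Ω v →
      lam * ∫ x in Ω, v x ^ 2 ≤ (∫ x in Ω, ‖gradient v x‖ ^ 2) + c * weightDenom Ω u v := by
  have hΩm : MeasurableSet Ω := hΩ.isOpen.measurableSet
  have hq2 : 2 < critExp n := crit_gt_two hn
  have hq0 : (0:ℝ) < critExp n := by linarith
  set q := critExp n with hqdef
  set e1 : ℝ := 1/2 - 1/q with he1def
  have he1 : 0 < e1 := by
    have h : 1/q < 1/2 := one_div_lt_one_div_of_lt two_pos hq2
    rw [he1def]; linarith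
  set e : ℝ := e1 * 2 with hedef
  have he : 0 < e := by positivity
  set SC : ℝ≥0∞ := (eLpNormLESNormFDerivOfEqInnerConst (volume : Measure (Euc n)) 2 : ℝ≥0∞)
    with hSC
  have hSCne : SC ≠ ⊤ := ENNReal.coe_ne_top
  set K : ℝ≥0∞ := ENNReal.ofReal lam * SC ^ (2:ℝ) with hK
  have hSC2ne : SC ^ (2:ℝ) ≠ ⊤ := by
    rw [rpow_two_eq]; exact ENNReal.pow_ne_top hSCne
  have hKne : K ≠ ⊤ := ENNReal.mul_ne_top ENNReal.ofReal_ne_top hSC2ne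
  have hK1ne : K + 1 ≠ ⊤ := ENNReal.add_ne_top.mpr ⟨hKne, ENNReal.one_ne_top⟩
  have hK10 : K + 1 ≠ 0 := by simp
  set δ : ℝ≥0∞ := ((K+1)⁻¹) ^ (1/e) with hδdef
  have hδpos : 0 < δ := by
    apply ENNReal.rpow_pos (ENNReal.inv_pos.mpr hK1ne)
    exact ENNReal.inv_ne_top.mpr hK10
  have hδe : δ ^ e = (K + 1)⁻¹ := by
    rw [hδdef, ← ENNReal.rpow_mul, one_div, inv_mul_cancel₀ he.ne', ENNReal.rpow_one]
  -- measurable representative of u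
  have hug : u =ᵐ[volume.restrict Ω] hu.meas.mk u := hu.meas.ae_eq_mk
  set g := hu.meas.mk u with hgdef
  have hgm : Measurable g := hu.meas.measurable_mk
  -- shrinking sets
  set A : ℕ → Set (Euc n) := fun j => {x | g x ≤ 1/((j:ℝ)+1)} ∩ Ω with hA
  have hAm : ∀ j, MeasurableSet (A j) :=
    fun j => (measurableSet_le hgm measurable_const).inter hΩm
  have hAanti : Antitone A := by
    intro a b hab
    apply Set.inter_subset_inter_left
    intro z hz
    simp only [Set.mem_setOf_eq] at hz ⊢
    refine le_trans hz ?_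
    apply one_div_le_one_div_of_le (by positivity)
    exact_mod_cast (by omega : a + 1 ≤ b + 1)
  have hAfin : volume (A 0) ≠ ⊤ :=
    ((measure_mono Set.inter_subset_right).trans_lt hΩ.bounded.measure_lt_top).ne
  have hAiInter : volume (⋂ j, A j) = 0 := by
    have hsub : (⋂ j, A j) ⊆ {x | g x ≤ 0} ∩ Ω := by
      intro z hz
      simp only [Set.mem_iInter, hA, Set.mem_inter_iff, Set.mem_setOf_eq] at hz
      refine ⟨?_, (hz 0).2⟩
      show g z ≤ 0
      refine le_of_forall_pos_le_add (fun ε hε => ?_)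
      obtain ⟨k, hk⟩ := exists_nat_one_div_lt hε
      calc g z ≤ 1 / (k + 1) := (hz k).1
        _ ≤ 0 + ε := by rw [zero_add]; exact hk.le
    refine measure_mono_null hsub ?_
    have hae : ∀ᵐ x ∂(volume.restrict Ω), 0 < g x := by
      filter_upwards [hupos, hug] with x h1 h2
      rwa [h2] at h1
    rw [ae_iff] at hae
    have : {x | g x ≤ 0} = {x | ¬ 0 < g x} := by simp [not_lt]
    rw [this, ← Measure.restrict_apply (by
      simpa [not_lt] using (measurableSet_le hgm measurable_const) : MeasurableSet {x | ¬ 0 < g x})]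
    exact hae
  have htd : Tendsto (fun j => volume (A j)) atTop (𝓝 0) := by
    rw [← hAiInter]
    exact tendsto_measure_iInter_atTop (fun j => (hAm j).nullMeasurableSet) hAanti ⟨0, hAfin⟩
  obtain ⟨j, hj⟩ := (htd.eventually_lt_const hδpos).exists
  set M : ℝ := 1/((j:ℝ)+1) with hM
  have hMpos : 0 < M := by positivity
  set P : ℝ := M ^ (q - 2) with hP
  have hPpos : 0 < P := Real.rpow_pos_of_pos hMpos _
  refine ⟨lam * P⁻¹, by positivity, fun v hv => ?_⟩
  -- facts about v
  have hvc : Continuous v := hv.smooth.continuous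
  have hcs : HasCompactSupport v := memH10_hasCompactSupport hΩ hv
  have hvm : Measurable v := hvc.measurable
  -- the ENNReal quantities
  set S' : ℝ≥0∞ := ∫⁻ x in Ω, (‖v x‖₊ : ℝ≥0∞) ^ (2:ℕ) with hS'
  set T' : ℝ≥0∞ := ∫⁻ x in Ω, (‖fderiv ℝ v x‖₊ : ℝ≥0∞) ^ (2:ℕ) with hT'
  set D' : ℝ≥0∞ := ∫⁻ x in Ω, ENNReal.ofReal (u x ^ (q-2) * v x ^ 2) with hD'
  set B : Set (Euc n) := {x | g x ≤ M} with hBdef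
  have hBm : MeasurableSet B := measurableSet_le hgm measurable_const
  have hBΩ : B ∩ Ω = A j := rfl
  set fInd : Euc n → ℝ≥0∞ := B.indicator (fun x => (‖v x‖₊ : ℝ≥0∞) ^ (2:ℕ)) with hfInd
  have hfIndm : Measurable fInd :=
    (hvm.nnnorm.coe_nnreal_ennreal.pow_const 2).indicator hBm
  -- step 1: pointwise splitting
  have hpt : ∀ᵐ x ∂(volume.restrict Ω), (‖v x‖₊:ℝ≥0∞) ^ (2:ℕ) ≤
      fInd x + ENNReal.ofReal P⁻¹ * ENNReal.ofReal (u x ^ (q-2) * v x ^ 2) := by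
    filter_upwards [hupos, hug] with x hx hgx
    by_cases hxB : x ∈ B
    · rw [hfInd, Set.indicator_of_mem hxB]
      exact le_add_right le_rfl
    · rw [hfInd, Set.indicator_of_notMem hxB, zero_add]
      have hMu : M ≤ u x := by
        rw [hgx]
        exact (not_le.mp hxB).le
      have h1 : P ≤ u x ^ (q-2) := Real.rpow_le_rpow hMpos.le hMu (by linarith)
      have h2 : v x ^ 2 ≤ P⁻¹ * (u x ^ (q-2) * v x ^ 2) := by
        have h3 : P * v x ^ 2 ≤ u x ^ (q-2) * v x ^ 2 :=
          mul_le_mul_of_nonneg_right h1 (sq_nonneg _)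
        calc v x ^ 2 = P⁻¹ * (P * v x ^ 2) := by field_simp
          _ ≤ P⁻¹ * (u x ^ (q-2) * v x ^ 2) :=
            mul_le_mul_of_nonneg_left h3 (inv_nonneg.mpr hPpos.le)
      calc (‖v x‖₊:ℝ≥0∞) ^ (2:ℕ) = ENNReal.ofReal (v x ^ 2) := (ofReal_sq _).symm
        _ ≤ ENNReal.ofReal (P⁻¹ * (u x ^ (q-2) * v x ^ 2)) := ENNReal.ofReal_le_ofReal h2
        _ = ENNReal.ofReal P⁻¹ * ENNReal.ofReal (u x ^ (q-2) * v x ^ 2) :=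
          ENNReal.ofReal_mul (inv_nonneg.mpr hPpos.le)
  -- step 1 integrated
  have hstep1 : S' ≤ (∫⁻ x in Ω, fInd x) + ENNReal.ofReal P⁻¹ * D' := by
    calc S' ≤ ∫⁻ x in Ω, (fInd x +
          ENNReal.ofReal P⁻¹ * ENNReal.ofReal (u x ^ (q-2) * v x ^ 2)) :=
        lintegral_mono_ae hpt
      _ = (∫⁻ x in Ω, fInd x) +
          ∫⁻ x in Ω, ENNReal.ofReal P⁻¹ * ENNReal.ofReal (u x ^ (q-2) * v x ^ 2) :=
        lintegral_add_left hfIndm _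
      _ = (∫⁻ x in Ω, fInd x) + ENNReal.ofReal P⁻¹ * D' := by
        rw [lintegral_const_mul' _ _ ENNReal.ofReal_ne_top]
  -- the indicator integral as an integral over A j
  have hIB : (∫⁻ x in Ω, fInd x) =
      ∫⁻ x, (‖v x‖₊:ℝ≥0∞) ^ (2:ℕ) ∂(volume.restrict (A j)) := by
    rw [hfInd, lintegral_indicator hBm, Measure.restrict_restrict hBm, hBΩ]
  -- T over all of space equals T over Ω
  have hTuniv : (∫⁻ x, (‖fderiv ℝ v x‖₊:ℝ≥0∞) ^ (2:ℕ)) = T' := by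
    rw [← lintegral_add_compl (fun x => (‖fderiv ℝ v x‖₊:ℝ≥0∞) ^ (2:ℕ)) hΩm]
    have hz : (∫⁻ x in Ωᶜ, (‖fderiv ℝ v x‖₊:ℝ≥0∞) ^ (2:ℕ)) = 0 := by
      have hae := fderiv_ae_zero_on_zero_set hΩm.compl
        (hv.smooth.differentiable one_ne_zero) (fun x hx => hv.vanish x hx)
      have h0 : ∀ᵐ x ∂(volume.restrict Ωᶜ), (‖fderiv ℝ v x‖₊:ℝ≥0∞) ^ (2:ℕ) = 0 := by
        filter_upwards [ae_restrict_of_ae hae, ae_restrict_mem hΩm.compl] with x h1 h2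
        rw [h1 h2]
        simp
      rw [lintegral_congr_ae h0, lintegral_zero]
    rw [hz, add_zero]
  -- Sobolev exponent
  set P' : ℝ≥0 := Real.toNNReal q with hP'
  have hP'coe : ((P' : ℝ≥0∞)).toReal = q := by
    rw [ENNReal.coe_toReal, hP', Real.coe_toNNReal _ hq0.le]
  have h2P' : (2:ℝ≥0∞) ≤ (P' : ℝ≥0∞) := by
    rw [show (2:ℝ≥0∞) = ((2:ℝ≥0):ℝ≥0∞) from (ENNReal.coe_ofNat 2).symm, ENNReal.coe_le_coe]
    rw [hP', ← Real.toNNReal_ofNat 2]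
    exact Real.toNNReal_le_toNNReal hq2.le
  -- step 2 : Hölder + Sobolev
  have hstep2 : (∫⁻ x in Ω, fInd x) ≤ volume (A j) ^ e * (SC ^ (2:ℝ) * T') := by
    have hHo := eLpNorm_le_eLpNorm_mul_rpow_measure_univ (p := (2:ℝ≥0∞))
      (q := (P' : ℝ≥0∞)) h2P' (f := v) (μ := volume.restrict (A j))
      hvc.aestronglyMeasurable
    rw [Measure.restrict_apply_univ] at hHo
    have hexp : 1 / (2:ℝ≥0∞).toReal - 1 / ((P':ℝ≥0∞)).toReal = e1 := by
      rw [hP'coe, ENNReal.toReal_ofNat, he1def]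
    rw [hexp] at hHo
    have hSo : eLpNorm v (P' : ℝ≥0∞) (volume.restrict (A j)) ≤
        SC * eLpNorm (fderiv ℝ v) 2 volume :=
      (eLpNorm_mono_measure _ Measure.restrict_le_self).trans (sobolev hn hv.smooth hcs)
    calc (∫⁻ x in Ω, fInd x)
        = eLpNorm v 2 (volume.restrict (A j)) ^ (2:ℝ) := by
          rw [hIB, eLpNorm_two_sq]
      _ ≤ (SC * eLpNorm (fderiv ℝ v) 2 volume * volume (A j) ^ e1) ^ (2:ℝ) := by
          apply ENNReal.rpow_le_rpow _ (by norm_num)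
          exact hHo.trans (mul_le_mul_left hSo _)
      _ = SC ^ (2:ℝ) * (eLpNorm (fderiv ℝ v) 2 volume) ^ (2:ℝ) *
            (volume (A j) ^ e1) ^ (2:ℝ) := by
          rw [ENNReal.mul_rpow_of_nonneg _ _ (by norm_num : (0:ℝ) ≤ 2),
            ENNReal.mul_rpow_of_nonneg _ _ (by norm_num : (0:ℝ) ≤ 2)]
      _ = volume (A j) ^ e * (SC ^ (2:ℝ) * T') := by
          rw [eLpNorm_two_sq, hTuniv, ← ENNReal.rpow_mul, ← hedef]
          ring
  -- smallness of the constant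
  have hsmall : volume (A j) ^ e * K ≤ 1 := by
    calc volume (A j) ^ e * K ≤ δ ^ e * K :=
        mul_le_mul_left (ENNReal.rpow_le_rpow hj.le he.le) _
      _ = (K+1)⁻¹ * K := by rw [hδe]
      _ ≤ (K+1)⁻¹ * (K+1) := mul_le_mul_right (self_le_add_right _ _) _
      _ = 1 := ENNReal.inv_mul_cancel hK10 hK1ne
  -- main ENNReal estimate
  have hmain : ENNReal.ofReal lam * S' ≤
      T' + ENNReal.ofReal lam * ENNReal.ofReal P⁻¹ * D' := by
    calc ENNReal.ofReal lam * S'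
        ≤ ENNReal.ofReal lam * ((∫⁻ x in Ω, fInd x) + ENNReal.ofReal P⁻¹ * D') :=
          mul_le_mul_right hstep1 _
      _ = ENNReal.ofReal lam * (∫⁻ x in Ω, fInd x) +
          ENNReal.ofReal lam * ENNReal.ofReal P⁻¹ * D' := by ring
      _ ≤ ENNReal.ofReal lam * (volume (A j) ^ e * (SC ^ (2:ℝ) * T')) +
          ENNReal.ofReal lam * ENNReal.ofReal P⁻¹ * D' := by
          gcongr
      _ = (volume (A j) ^ e * K) * T' +
          ENNReal.ofReal lam * ENNReal.ofReal P⁻¹ * D' := by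
          rw [hK]; ring
      _ ≤ 1 * T' + ENNReal.ofReal lam * ENNReal.ofReal P⁻¹ * D' := by
          gcongr
      _ = T' + ENNReal.ofReal lam * ENNReal.ofReal P⁻¹ * D' := by rw [one_mul]
  -- integrability facts and conversions to real integrals
  have hDint : Integrable (fun x => u x ^ (q-2) * v x ^ 2) (volume.restrict Ω) :=
    weight_integrable hn hΩ hu hvc hcs
  have hDnn : ∀ᵐ x ∂(volume.restrict Ω), 0 ≤ u x ^ (q-2) * v x ^ 2 := by
    filter_upwards [hupos] with x hx
    exact mul_nonneg (Real.rpow_nonneg hx.le _) (sq_nonneg _)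
  have hDeq : weightDenom Ω u v = D'.toReal := by
    rw [weightDenom, weightCross]
    rw [show (∫ x in Ω, u x ^ (critExp n - 2) * (v x * v x)) =
        ∫ x in Ω, u x ^ (q-2) * v x ^ 2 from
      integral_congr_ae (Filter.Eventually.of_forall (fun x => by rw [hqdef]; ring))]
    rw [integral_eq_lintegral_of_nonneg_ae hDnn hDint.aestronglyMeasurable]
  have hDne : D' ≠ ⊤ := by
    have hle : D' ≤ ∫⁻ x in Ω, (‖u x ^ (q-2) * v x ^ 2‖₊ : ℝ≥0∞) := by
      refine lintegral_mono (fun x => ?_)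
      simp only [← enorm_eq_nnnorm, Real.enorm_eq_ofReal_abs]
      exact ENNReal.ofReal_le_ofReal (le_abs_self _)
    exact (hle.trans_lt hDint.2).ne
  have hSeq : (∫ x in Ω, v x ^ 2) = S'.toReal := by
    rw [integral_eq_lintegral_of_nonneg_ae
      (Filter.Eventually.of_forall (fun x => sq_nonneg (v x)))
      (hvc.pow 2).aestronglyMeasurable]
    congr 1
    exact lintegral_congr (fun x => ofReal_sq (v x))
  have hSne : S' ≠ ⊤ := by
    have h2 := (hasFiniteIntegral_def _ _).mp hv.sq_int.2
    refine ((lintegral_congr (fun x => ?_)).trans_lt h2).ne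
    simp only [enorm_eq_nnnorm, nnnorm_pow, ENNReal.coe_pow]
  have hTeq : (∫ x in Ω, ‖gradient v x‖ ^ 2) = T'.toReal := by
    rw [show (∫ x in Ω, ‖gradient v x‖ ^ 2) = ∫ x in Ω, ‖fderiv ℝ v x‖ ^ 2 from
      integral_congr_ae (Filter.Eventually.of_forall
        (fun x => by simp only [norm_gradient]))]
    rw [integral_eq_lintegral_of_nonneg_ae
      (Filter.Eventually.of_forall (fun x => sq_nonneg _))
      ((hv.smooth.continuous_fderiv one_ne_zero).norm.pow 2).aestronglyMeasurable]
    congr 1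
    refine lintegral_congr (fun x => ?_)
    rw [ofReal_sq, nnnorm_norm]
  have hTne : T' ≠ ⊤ := by
    have h2 := (hasFiniteIntegral_def _ _).mp hv.grad_sq_int.2
    refine ((lintegral_congr (fun x => ?_)).trans_lt h2).ne
    rw [enorm_eq_nnnorm, show ‖(fun x => ‖gradient v x‖ ^ 2) x‖₊ = ‖fderiv ℝ v x‖₊ ^ 2 from ?_, ENNReal.coe_pow]
    simp only [norm_gradient]
    rw [nnnorm_pow, nnnorm_norm]
  -- take toReal of hmain
  have hRne : T' + ENNReal.ofReal lam * ENNReal.ofReal P⁻¹ * D' ≠ ⊤ :=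
    ENNReal.add_ne_top.mpr ⟨hTne, ENNReal.mul_ne_top
      (ENNReal.mul_ne_top ENNReal.ofReal_ne_top ENNReal.ofReal_ne_top) hDne⟩
  have hfinal := ENNReal.toReal_mono hRne hmain
  rw [ENNReal.toReal_mul, ENNReal.toReal_ofReal hlam] at hfinal
  rw [ENNReal.toReal_add hTne (ENNReal.mul_ne_top
      (ENNReal.mul_ne_top ENNReal.ofReal_ne_top ENNReal.ofReal_ne_top) hDne)] at hfinal
  rw [ENNReal.toReal_mul, ENNReal.toReal_mul, ENNReal.toReal_ofReal hlam,
    ENNReal.toReal_ofReal (inv_nonneg.mpr hPpos.le)] at hfinal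
  rw [hSeq, hTeq, hDeq]
  linarith


end BNaux

theorem mu_one_bounded_below {n : ℕ} (hn : 3 ≤ n) (Ω : Set (Euc n))
    (hΩ : IsNiceDomain Ω) (lam : ℝ) (hlam : 0 ≤ lam)
    (u : Euc n → ℝ) (hu : MemL2star Ω u) (hupos : aePos Ω u) :
    ∃ C : ℝ, ∀ v : Euc n → ℝ, MemH10 Ω v → aeNonzero Ω v →
      C ≤ rayleigh Ω lam u v := by
  obtain ⟨c, hc0, hkey⟩ := BNaux.key_estimate hn Ω hΩ lam hlam u hu hupos
  refine ⟨-c, fun v hv hvne => ?_⟩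
  have hD : 0 < weightDenom Ω u v := BNaux.weightDenom_pos hn hΩ hu hupos hv hvne
  have hscint : Integrable (fun x => lam * v x ^ 2) (volume.restrict Ω) :=
    hv.sq_int.const_mul lam
  have hE : energyForm Ω lam v =
      (∫ x in Ω, ‖gradient v x‖ ^ 2) - lam * ∫ x in Ω, v x ^ 2 := by
    rw [energyForm, integral_sub hv.grad_sq_int hscint, integral_const_mul]
  rw [rayleigh, hE, le_div_iff₀ hD]
  have h := hkey v hv
  linarith
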